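/- arXiv:1306.6202 — 3 statements merged into one kernel-verified Lean document; each statement's English description precedes it below -/
import Mathlib

section
/- Let G be a complete graph on n vertices with edges coloured from {1,2,3} such that every vertex w has |A_w| = 2, and suppose at least two of the classes V_1, V_2, V_3 (where w ∈ V_i iff i ∉ A_w) are nonempty. Then there exist a colour c and a set of at most 3 vertices that strongly c-dominates at least 2n/3 of the vertices. -/
/-!
Every vertex sees exactly two of the three colours, so it misses exactly one: the classes
`V_1, V_2, V_3` partition the vertex set, and an edge between `V_p` and `V_q` (`p ≠ q`) can only
have the third colour `r`. Hence one vertex `u ∈ V_p` and one `v ∈ V_q` together strongly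
`r`-dominate every vertex outside `V_r`. Choose `r` so that `V_p` and `V_q` are nonempty and
`|V_r| ≤ n/3`: the smallest class if all three are nonempty, an empty class otherwise.
-/

/-- The set of colours appearing on edges incident to `w`. -/
def colourSet {V : Type*} (col : V → V → ℕ) (w : V) : Set ℕ :=
  {c | ∃ u, u ≠ w ∧ col w u = c}

/-- `V_c` in the paper. -/
def colourClass {V : Type*} (col : V → V → ℕ) (c : ℕ) : Set V :=
  {w | c ∉ colourSet col w}

section ColourSet

variable {V : Type*} {col : V → V → ℕ} {P : Set ℕ} {w : V}

lemma colourSet_subset (hcol : ∀ x y : V, x ≠ y → col x y ∈ P) (w : V) :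
    colourSet col w ⊆ P := by
  rintro _ ⟨u, hu, rfl⟩
  exact hcol w u hu.symm

lemma ncard_sdiff_colourSet (hsub : colourSet col w ⊆ P) (hP : P.ncard = 3)
    (h2 : (colourSet col w).ncard = 2) : (P \ colourSet col w).ncard = 1 := by
  rw [Set.ncard_sdiff hsub (Set.finite_of_ncard_ne_zero (by omega)), hP, h2]

lemma exists_not_mem_colourSet (hsub : colourSet col w ⊆ P) (hP : P.ncard = 3)
    (h2 : (colourSet col w).ncard = 2) : ∃ c ∈ P, c ∉ colourSet col w := by
  obtain ⟨c, hc⟩ := Set.ncard_eq_one.mp (ncard_sdiff_colourSet hsub hP h2)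
  exact ⟨c, (hc ▸ Set.mem_singleton c : c ∈ P \ colourSet col w)⟩

lemma eq_of_not_mem_colourSet (hsub : colourSet col w ⊆ P) (hP : P.ncard = 3)
    (h2 : (colourSet col w).ncard = 2) {p q : ℕ} (hp : p ∈ P) (hq : q ∈ P)
    (hpw : p ∉ colourSet col w) (hqw : q ∉ colourSet col w) : p = q := by
  obtain ⟨c, hc⟩ := Set.ncard_eq_one.mp (ncard_sdiff_colourSet hsub hP h2)
  have hp' : p ∈ P \ colourSet col w := ⟨hp, hpw⟩
  have hq' : q ∈ P \ colourSet col w := ⟨hq, hqw⟩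
  rw [hc] at hp' hq'
  exact hp'.trans hq'.symm

end ColourSet

section ThreeColours

variable {V : Type*} {col : V → V → ℕ} {p q r : ℕ}

lemma col_eq_of_not_mem_colourSet (hsym : ∀ x y, col x y = col y x)
    (hpal : ∀ x y : V, x ≠ y → col x y ∈ ({p, q, r} : Set ℕ)) {x y : V} (hxy : x ≠ y)
    (hx : p ∉ colourSet col x) (hy : q ∉ colourSet col y) : col x y = r := by
  rcases hpal x y hxy with h | h | h
  · exact absurd ⟨y, hxy.symm, h⟩ hx
  · exact absurd ⟨x, hxy, (hsym y x).trans h⟩ hy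
  · exact h

lemma ncard_colourClass_add_le [Finite V]
    (hpal : ∀ x y : V, x ≠ y → col x y ∈ ({p, q, r} : Set ℕ))
    (hpq : p ≠ q) (hpr : p ≠ r) (hqr : q ≠ r) (h2 : ∀ w, (colourSet col w).ncard = 2) :
    (colourClass col p).ncard + (colourClass col q).ncard + (colourClass col r).ncard
      ≤ Nat.card V := by
  have hP : ({p, q, r} : Set ℕ).ncard = 3 := Set.ncard_eq_three.mpr ⟨p, q, r, hpq, hpr, hqr, rfl⟩
  have hdisj : ∀ {a b}, a ∈ ({p, q, r} : Set ℕ) → b ∈ ({p, q, r} : Set ℕ) → a ≠ b →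
      Disjoint (colourClass col a) (colourClass col b) := fun ha hb hab =>
    Set.disjoint_left.mpr fun w hwa hwb =>
      hab (eq_of_not_mem_colourSet (colourSet_subset hpal w) hP (h2 w) ha hb hwa hwb)
  rw [← Set.ncard_union_eq (hdisj (by simp) (by simp) hpq),
    ← Set.ncard_union_eq (Set.disjoint_union_left.mpr
      ⟨hdisj (by simp) (by simp) hpr, hdisj (by simp) (by simp) hqr⟩)]
  exact Set.ncard_le_card _

lemma setOf_mem_colourSet_subset_dominated [DecidableEq V] (hsym : ∀ x y, col x y = col y x)
    (hpal : ∀ x y : V, x ≠ y → col x y ∈ ({p, q, r} : Set ℕ))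
    (hpq : p ≠ q) (hpr : p ≠ r) (hqr : q ≠ r) (h2 : ∀ w, (colourSet col w).ncard = 2)
    {u v : V} (hu : p ∉ colourSet col u) (hv : q ∉ colourSet col v) :
    {b | r ∈ colourSet col b} ⊆ {b | ∃ a ∈ ({u, v} : Finset V), a ≠ b ∧ col a b = r} := by
  have hP : ({p, q, r} : Set ℕ).ncard = 3 := Set.ncard_eq_three.mpr ⟨p, q, r, hpq, hpr, hqr, rfl⟩
  have hsub := colourSet_subset hpal
  intro b hb
  obtain ⟨c, hc, hbc⟩ := exists_not_mem_colourSet (hsub b) hP (h2 b)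
  rcases hc with rfl | rfl | rfl
  · have hvb : v ≠ b := by
      rintro rfl
      exact hpq (eq_of_not_mem_colourSet (hsub v) hP (h2 v) (by simp) (by simp) hbc hv)
    exact ⟨v, by simp, hvb,
      (hsym v b).trans (col_eq_of_not_mem_colourSet hsym hpal hvb.symm hbc hv)⟩
  · have hub : u ≠ b := by
      rintro rfl
      exact hpq (eq_of_not_mem_colourSet (hsub u) hP (h2 u) (by simp) (by simp) hu hbc)
    exact ⟨u, by simp, hub, col_eq_of_not_mem_colourSet hsym hpal hub hu hbc⟩
  · exact absurd hb hbc

lemma exists_pair_dominating [Finite V] [DecidableEq V] (hsym : ∀ x y, col x y = col y x)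
    (hpal : ∀ x y : V, x ≠ y → col x y ∈ ({p, q, r} : Set ℕ))
    (hpq : p ≠ q) (hpr : p ≠ r) (hqr : q ≠ r) (h2 : ∀ w, (colourSet col w).ncard = 2)
    (hp : (colourClass col p).Nonempty) (hq : (colourClass col q).Nonempty)
    (hr : 3 * (colourClass col r).ncard ≤ Nat.card V) :
    ∃ S : Finset V, S.card ≤ 2 ∧
      2 * Nat.card V ≤ 3 * {b : V | ∃ a ∈ S, a ≠ b ∧ col a b = r}.ncard := by
  obtain ⟨u, hu⟩ := hp
  obtain ⟨v, hv⟩ := hq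
  refine ⟨{u, v}, Finset.card_le_two, ?_⟩
  have hcompl := Set.ncard_add_ncard_compl {b | r ∈ colourSet col b}
  have hdom := Set.ncard_le_ncard
    (setOf_mem_colourSet_subset_dominated hsym hpal hpq hpr hqr h2 hu hv) (Set.toFinite _)
  change _ + (colourClass col r).ncard = _ at hcompl
  omega

end ThreeColours

lemma exists_two_pos_and_third_le {a₁ a₂ a₃ n : ℕ} (hsum : a₁ + a₂ + a₃ ≤ n)
    (htwo : (0 < a₁ ∧ 0 < a₂) ∨ (0 < a₁ ∧ 0 < a₃) ∨ (0 < a₂ ∧ 0 < a₃)) :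
    (0 < a₂ ∧ 0 < a₃ ∧ 3 * a₁ ≤ n) ∨ (0 < a₁ ∧ 0 < a₃ ∧ 3 * a₂ ≤ n) ∨
      (0 < a₁ ∧ 0 < a₂ ∧ 3 * a₃ ≤ n) := by
  omega

theorem stmt_3_general {V : Type*} [Fintype V]
    (n : ℕ) (hn : Fintype.card V = n)
    (col : V → V → ℕ) (hsym : ∀ x y, col x y = col y x)
    (hcol : ∀ x y : V, x ≠ y → col x y ∈ ({1, 2, 3} : Set ℕ))
    (h2 : ∀ w : V, (colourSet col w).ncard = 2)
    (hne : ∃ i ∈ ({1, 2, 3} : Set ℕ), ∃ j ∈ ({1, 2, 3} : Set ℕ), i ≠ j ∧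
      {w : V | i ∉ colourSet col w}.Nonempty ∧
      {w : V | j ∉ colourSet col w}.Nonempty) :
    ∃ c : ℕ, ∃ S : Finset V, S.card ≤ 3 ∧
      2 * n ≤ 3 * {b : V | ∃ a ∈ S, a ≠ b ∧ col a b = c}.ncard := by
  classical
  rw [← hn, ← Nat.card_eq_fintype_card]
  have dominate : ∀ p q r : ℕ, ({p, q, r} : Set ℕ) = {1, 2, 3} → p ≠ q → p ≠ r → q ≠ r →
      0 < (colourClass col p).ncard → 0 < (colourClass col q).ncard →
      3 * (colourClass col r).ncard ≤ Nat.card V →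
      ∃ c : ℕ, ∃ S : Finset V, S.card ≤ 3 ∧
        2 * Nat.card V ≤ 3 * {b : V | ∃ a ∈ S, a ≠ b ∧ col a b = c}.ncard := by
    intro p q r hpal hpq hpr hqr hp hq hr
    obtain ⟨S, hS, hdom⟩ := exists_pair_dominating hsym (hpal ▸ hcol) hpq hpr hqr h2
      ((Set.ncard_pos).mp hp) ((Set.ncard_pos).mp hq) hr
    exact ⟨r, S, by omega, hdom⟩
  have hsum := ncard_colourClass_add_le hcol (by decide) (by decide) (by decide) h2
  obtain ⟨i, hi, j, hj, hij, hVi, hVj⟩ := hne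
  have hi' := (Set.ncard_pos (s := colourClass col i)).mpr hVi
  have hj' := (Set.ncard_pos (s := colourClass col j)).mpr hVj
  have htwo : (0 < (colourClass col 1).ncard ∧ 0 < (colourClass col 2).ncard) ∨
      (0 < (colourClass col 1).ncard ∧ 0 < (colourClass col 3).ncard) ∨
      (0 < (colourClass col 2).ncard ∧ 0 < (colourClass col 3).ncard) := by
    rcases hi with rfl | rfl | rfl <;> rcases hj with rfl | rfl | rfl <;> tauto
  rcases exists_two_pos_and_third_le hsum htwo with ⟨hp, hq, hr⟩ | ⟨hp, hq, hr⟩ | ⟨hp, hq, hr⟩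
  · exact dominate 2 3 1 (by ext; simp; omega) (by decide) (by decide) (by decide) hp hq hr
  · exact dominate 1 3 2 (by ext; simp; omega) (by decide) (by decide) (by decide) hp hq hr
  · exact dominate 1 2 3 rfl (by decide) (by decide) (by decide) hp hq hr

/-- if every vertex sees exactly two colours and at least two of
the classes `V_1, V_2, V_3` are nonempty, there are a colour `c` and a set of
at most 3 vertices strongly `c`-dominating at least `2n/3` vertices. -/
theorem stmt_3 {V : Type*} [Fintype V] [DecidableEq V]
    (n : ℕ) (hn : Fintype.card V = n)
    (col : V → V → ℕ) (hsym : ∀ x y, col x y = col y x)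
    (hcol : ∀ x y : V, x ≠ y → col x y ∈ ({1, 2, 3} : Set ℕ))
    (h2 : ∀ w : V, (colourSet col w).ncard = 2)
    (hne : ∃ i ∈ ({1, 2, 3} : Set ℕ), ∃ j ∈ ({1, 2, 3} : Set ℕ), i ≠ j ∧
      {w : V | i ∉ colourSet col w}.Nonempty ∧
      {w : V | j ∉ colourSet col w}.Nonempty) :
    ∃ c : ℕ, ∃ S : Finset V, S.card ≤ 3 ∧
      2 * n ≤ 3 * {b : V | ∃ a ∈ S, a ≠ b ∧ col a b = c}.ncard :=
  stmt_3_general n hn col hsym hcol h2 hne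
end

section
/- Let G be a complete graph on n ≥ 3 vertices whose edges are 3-coloured, and suppose that for every colour c, no set of 3 vertices strongly c-dominates at least 2n/3 vertices. Assume moreover that for all n ≥ 2 and any 2-coloured complete graph on n vertices there is a colour c and a set of at most 3 vertices strongly c-dominating at least 7n/8 vertices (the Erdős–Faudree–Gyárfás–Schelp theorem for t = 3). Then G contains a vertex v with |A_v| = 3, i.e., all three colours appear on edges incident to v. -/
namespace ThreeColouring

variable {V W : Type*} {col : V → V → ℕ}

def dominated (col : V → V → ℕ) (c : ℕ) (S : Finset V) : Set V :=
  {b | ∃ a ∈ S, a ≠ b ∧ col a b = c}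

theorem dominated_mono {c : ℕ} {S T : Finset V} (h : S ⊆ T) :
    dominated col c S ⊆ dominated col c T := by
  rintro b ⟨a, ha, hab, hc⟩
  exact ⟨a, h ha, hab, hc⟩

theorem dominated_comp_equiv (f : W ≃ V) (c : ℕ) (S : Finset W) :
    dominated (fun x y => col (f x) (f y)) c S = f ⁻¹' dominated col c (S.map f.toEmbedding) := by
  ext b
  simp only [dominated, Set.mem_ofPred_eq, Set.mem_preimage, Finset.mem_map_equiv]
  exact ⟨fun ⟨a, ha, hab, hc⟩ => ⟨f a, by simpa using ha, f.injective.ne hab, hc⟩,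
    fun ⟨a, ha, hab, hc⟩ => ⟨f.symm a, ha, fun h => hab (by simp [← h]), by simpa using hc⟩⟩

theorem ncard_dominated_comp_equiv (f : W ≃ V) (c : ℕ) (S : Finset W) :
    (dominated (fun x y => col (f x) (f y)) c S).ncard =
      (dominated col c (S.map f.toEmbedding)).ncard := by
  rw [dominated_comp_equiv]
  exact Set.ncard_preimage_of_injective_subset_range f.injective (by simp)

theorem ncard_dominated_lt_of_card_le [Fintype V] {n : ℕ}
    (hn : Fintype.card V = n) (hn3 : 3 ≤ n) {c : ℕ}
    (hc : ∀ S : Finset V, S.card = 3 → 3 * (dominated col c S).ncard < 2 * n)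
    {S : Finset V} (hS : S.card ≤ 3) : 3 * (dominated col c S).ncard < 2 * n := by
  obtain ⟨T, hST, -, hT⟩ :=
    Finset.exists_subsuperset_card_eq (Finset.subset_univ S) hS (by rwa [Finset.card_univ, hn])
  have := Set.ncard_le_ncard (dominated_mono (col := col) (c := c) hST)
  have := hc T hT
  omega

theorem colourSet_subset (hcol : ∀ x y : V, x ≠ y → col x y ∈ ({1, 2, 3} : Set ℕ)) (v : V) :
    colourSet col v ⊆ {1, 2, 3} := by
  rintro c ⟨u, hu, rfl⟩
  exact hcol v u hu.symm

theorem exists_mem_not_mem_colourSet (hcol : ∀ x y : V, x ≠ y → col x y ∈ ({1, 2, 3} : Set ℕ))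
    {v : V} (hv : colourSet col v ≠ {1, 2, 3}) : ∃ c ∈ ({1, 2, 3} : Set ℕ), c ∉ colourSet col v :=
  Set.exists_of_ssubset ((colourSet_subset hcol v).ssubset_of_ne hv)

theorem col_ne_of_not_mem_colourSet {u v : V} {c : ℕ} (hc : c ∉ colourSet col v) (hu : u ≠ v) :
    col v u ≠ c :=
  fun h => hc ⟨u, hu, h⟩

/-- With the colours `1, 2, 3`, the colour other than `c₁ ≠ c₂` is `6 - c₁ - c₂`. -/
theorem col_eq_of_not_mem_colourSet (hsym : ∀ x y, col x y = col y x)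
    (hcol : ∀ x y : V, x ≠ y → col x y ∈ ({1, 2, 3} : Set ℕ)) {a v : V} {c₁ c₂ : ℕ}
    (hc₁ : c₁ ∈ ({1, 2, 3} : Set ℕ)) (hc₂ : c₂ ∈ ({1, 2, 3} : Set ℕ)) (hne : c₁ ≠ c₂)
    (ha : c₁ ∉ colourSet col a) (hv : c₂ ∉ colourSet col v) (hav : a ≠ v) :
    col a v = 6 - c₁ - c₂ := by
  have h₁ := col_ne_of_not_mem_colourSet ha hav.symm
  have h₂ := col_ne_of_not_mem_colourSet hv hav
  have h₃ := hcol a v hav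
  rw [hsym] at h₂
  simp only [Set.mem_insert_iff, Set.mem_singleton_iff] at hc₁ hc₂ h₃
  omega

theorem setOf_union_subset_dominated [DecidableEq V] (hsym : ∀ x y, col x y = col y x)
    (hcol : ∀ x y : V, x ≠ y → col x y ∈ ({1, 2, 3} : Set ℕ)) {m : V → ℕ}
    (hm3 : ∀ v, m v ∈ ({1, 2, 3} : Set ℕ)) (hm : ∀ v, m v ∉ colourSet col v) {a b : V}
    (hab : m a ≠ m b) :
    {v | m v = m a} ∪ {v | m v = m b} ⊆ dominated col (6 - m a - m b) {a, b} := by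
  rintro v (hv | hv) <;> simp only [Set.mem_ofPred_eq] at hv
  · have hbv : b ≠ v := by rintro rfl; exact hab hv.symm
    refine ⟨b, by simp, hbv, ?_⟩
    rw [col_eq_of_not_mem_colourSet hsym hcol (hm3 b) (hm3 v) (hv ▸ hab.symm) (hm b) (hm v) hbv,
      hv]
    omega
  · have hav : a ≠ v := by rintro rfl; exact hab hv
    exact ⟨a, by simp, hav,
      hv ▸ col_eq_of_not_mem_colourSet hsym hcol (hm3 a) (hm3 v) (hv ▸ hab) (hm a) (hm v) hav⟩

theorem ncard_setOf_add_ncard_setOf_lt [Finite V] [DecidableEq V] {n : ℕ}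
    (hsym : ∀ x y, col x y = col y x) (hcol : ∀ x y : V, x ≠ y → col x y ∈ ({1, 2, 3} : Set ℕ))
    (hdom : ∀ c ∈ ({1, 2, 3} : Set ℕ), ∀ S : Finset V, S.card ≤ 3 →
      3 * (dominated col c S).ncard < 2 * n)
    {m : V → ℕ} (hm3 : ∀ v, m v ∈ ({1, 2, 3} : Set ℕ)) (hm : ∀ v, m v ∉ colourSet col v)
    {a b : V} (hab : m a ≠ m b) :
    3 * ({v | m v = m a}.ncard + {v | m v = m b}.ncard) < 2 * n := by
  have hdisj : Disjoint {v | m v = m a} {v | m v = m b} :=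
    Set.disjoint_left.2 fun v hva hvb => hab (hva.symm.trans hvb)
  have hthird : 6 - m a - m b ∈ ({1, 2, 3} : Set ℕ) := by
    have ha := hm3 a
    have hb := hm3 b
    simp only [Set.mem_insert_iff, Set.mem_singleton_iff] at ha hb ⊢
    omega
  rw [← Set.ncard_union_eq hdisj]
  exact (Nat.mul_le_mul_left 3 (Set.ncard_le_ncard
    (setOf_union_subset_dominated hsym hcol hm3 hm hab))).trans_lt
    (hdom _ hthird _ (Finset.card_le_two.trans (by norm_num)))

theorem eq_of_ncard_setOf_add_ncard_setOf_lt [Finite V] (m : V → ℕ)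
    (hm3 : ∀ v, m v ∈ ({1, 2, 3} : Set ℕ))
    (h : ∀ a b, m a ≠ m b → 3 * ({v | m v = m a}.ncard + {v | m v = m b}.ncard) < 2 * Nat.card V)
    (a b : V) : m a = m b := by
  by_contra hab
  have hcard := Set.ncard_univ V
  have hab' := h a b hab
  have hu := Set.ncard_union_le {v | m v = m a} {v | m v = m b}
  by_cases hthird : ∃ c, m c ≠ m a ∧ m c ≠ m b
  · obtain ⟨c, hca, hcb⟩ := hthird
    have hcover : Set.univ ⊆ {v | m v = m a} ∪ {v | m v = m b} ∪ {v | m v = m c} := by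
      intro v _
      have hv := hm3 v
      have ha := hm3 a
      have hb := hm3 b
      have hc := hm3 c
      simp only [Set.mem_union, Set.mem_ofPred_eq, Set.mem_insert_iff,
        Set.mem_singleton_iff] at hv ha hb hc ⊢
      omega
    have := Set.ncard_le_ncard hcover
    have := Set.ncard_union_le ({v | m v = m a} ∪ {v | m v = m b}) {v | m v = m c}
    have := h a c (Ne.symm hca)
    have := h b c (Ne.symm hcb)
    omega
  · push Not at hthird
    have hcover : Set.univ ⊆ {v | m v = m a} ∪ {v | m v = m b} :=
      fun v _ => (eq_or_ne (m v) (m a)).imp id (hthird v)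
    have := Set.ncard_le_ncard hcover
    omega

end ThreeColouring

open ThreeColouring

/-- a counterexample to the 2/3 theorem contains a vertex
incident to all three colours, assuming the Erdős–Faudree–Gyárfás–Schelp
theorem for `t = 3` on 2-coloured complete graphs. -/
theorem stmt_5 {V : Type*} [Fintype V] [DecidableEq V]
    (n : ℕ) (hn : Fintype.card V = n) (hn3 : 3 ≤ n)
    (col : V → V → ℕ) (hsym : ∀ x y, col x y = col y x)
    (hcol : ∀ x y : V, x ≠ y → col x y ∈ ({1, 2, 3} : Set ℕ))
    (hcounter : ∀ c ∈ ({1, 2, 3} : Set ℕ), ∀ S : Finset V, S.card = 3 →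
      3 * {b : V | ∃ a ∈ S, a ≠ b ∧ col a b = c}.ncard < 2 * n)
    (hEFGS : ∀ m : ℕ, 2 ≤ m → ∀ col' : Fin m → Fin m → ℕ,
      (∀ x y, col' x y = col' y x) →
      (∀ x y : Fin m, x ≠ y → col' x y ∈ ({1, 2, 3} : Set ℕ)) →
      (∃ c₀ ∈ ({1, 2, 3} : Set ℕ), ∀ x y : Fin m, x ≠ y → col' x y ≠ c₀) →
      ∃ c ∈ ({1, 2, 3} : Set ℕ), ∃ S : Finset (Fin m), S.card ≤ 3 ∧
        7 * m ≤ 8 * {b : Fin m | ∃ a ∈ S, a ≠ b ∧ col' a b = c}.ncard) :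
    ∃ v : V, colourSet col v = {1, 2, 3} := by
  by_contra! hno
  choose m hm3 hm using fun v => exists_mem_not_mem_colourSet hcol (hno v)
  have hdom : ∀ c ∈ ({1, 2, 3} : Set ℕ), ∀ S : Finset V, S.card ≤ 3 →
      3 * (dominated col c S).ncard < 2 * n :=
    fun c hc _ => ncard_dominated_lt_of_card_le hn hn3 (hcounter c hc)
  have hconst := eq_of_ncard_setOf_add_ncard_setOf_lt m hm3 fun a b hab => by
    simpa [Nat.card_eq_fintype_card, hn] using
      ncard_setOf_add_ncard_setOf_lt hsym hcol hdom hm3 hm hab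
  let f : Fin n ≃ V := (Fintype.equivFinOfCardEq hn).symm
  let v₀ := f ⟨0, by omega⟩
  obtain ⟨c, hc, S, hS, hSdom⟩ := hEFGS n (by omega) (fun x y => col (f x) (f y))
    (fun _ _ => hsym _ _) (fun x y hxy => hcol _ _ (f.injective.ne hxy))
    ⟨m v₀, hm3 v₀, fun x y hxy => hconst v₀ (f x) ▸
      col_ne_of_not_mem_colourSet (hm (f x)) (f.injective.ne hxy.symm)⟩
  have := hdom c hc (S.map f.toEmbedding) (by simpa using hS)
  rw [← ncard_dominated_comp_equiv] at this
  change 7 * n ≤ 8 * (dominated (fun x y => col (f x) (f y)) c S).ncard at hSdom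
  omega
end

section
/- Consider the 3-colouring of the complete graph on vertex set V = V_0 ∪ V_1 ∪ V_2 (disjoint classes of equal size n/3) where an edge xy with x ∈ V_i, y ∈ V_j (i possibly equal to j) is coloured i if i = j or i ≡ j+1 (mod 3), and coloured j otherwise. Then for every colour c ∈ {0,1,2} and every subset S ⊆ V, the set of vertices strongly c-dominated by S has size at most 2n/3. -/
/-! A vertex receiving an edge of colour `c` lies in `V_c` or in `V_{c-1}`, since between
distinct classes the colour is that of the class following the other one cyclically; these
two classes together have `2n/3` vertices. -/

theorem Fin.eq_or_eq_add_two_of_ite_eq {i j c : Fin 3}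
    (h : (if i = j then i else if i = j + 1 then i else j) = c) : j = c ∨ j = c + 2 := by
  revert i j c
  decide

theorem stmt_7_general {V : Type*} [Fintype V]
    (n : ℕ)
    (part : V → Fin 3)
    (hsize : ∀ i : Fin 3, 3 * {v : V | part v = i}.ncard = n)
    (col : V → V → Fin 3)
    (hcol : ∀ x y : V, col x y =
      if part x = part y then part x
      else if part x = part y + 1 then part x else part y) :
    ∀ c : Fin 3, ∀ S : Set V,
      3 * {v : V | ∃ s ∈ S, s ≠ v ∧ col s v = c}.ncard ≤ 2 * n := by
  intro c S
  have hsub : {v : V | ∃ s ∈ S, s ≠ v ∧ col s v = c} ⊆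
      {v : V | part v = c} ∪ {v : V | part v = c + 2} := by
    rintro v ⟨s, -, -, hsv⟩
    exact Fin.eq_or_eq_add_two_of_ite_eq ((hcol s v).symm.trans hsv)
  calc 3 * {v : V | ∃ s ∈ S, s ≠ v ∧ col s v = c}.ncard
      ≤ 3 * ({v : V | part v = c}.ncard + {v : V | part v = c + 2}.ncard) := by
        gcongr
        exact (Set.ncard_le_ncard hsub).trans (Set.ncard_union_le _ _)
    _ = 2 * n := by rw [mul_add, hsize, hsize, two_mul]

/-- Kierstead's construction: with three equal classes given by
`part : V → Fin 3` and colouring `col x y = part x` if `part x = part y` or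
`part x = part y + 1`, else `part y`, every set `S` strongly `c`-dominates at
most `2n/3` vertices, for every colour `c`. -/
theorem stmt_7 {V : Type*} [Fintype V] [DecidableEq V]
    (n : ℕ) (hn : Fintype.card V = n)
    (part : V → Fin 3)
    (hsize : ∀ i : Fin 3, 3 * {v : V | part v = i}.ncard = n)
    (col : V → V → Fin 3)
    (hcol : ∀ x y : V, col x y =
      if part x = part y then part x
      else if part x = part y + 1 then part x else part y) :
    ∀ c : Fin 3, ∀ S : Set V,
      3 * {v : V | ∃ s ∈ S, s ≠ v ∧ col s v = c}.ncard ≤ 2 * n :=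
  stmt_7_general n part hsize col hcol
end
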